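/- For every positive integer n ≥ 3, the number of finite sets E of positive integers with max E = n+1, 2 ∉ E, 3 ∉ E, min E > |E|, and |E| ≠ 2, equals F_n - (n - 2). -/

import Mathlib

/-!
A set `E` with `max E = n + 1` and `|E| < min E` of size `k` is `{n + 1}` together with `k - 1`
elements of the open interval `(k, n + 1)`, so there are `C(n - k, k - 1)` of them, and these
numbers sum to `F_n`. Among such sets, avoiding `2` and `3` is automatic unless `|E| = 2`:
for `|E| ≥ 3` the minimum exceeds `3`, and the singleton is `{n + 1}` with `n + 1 ≥ 4`. The
excluded sets of size `2` number `C(n - 2, 1) = n - 2`.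
-/

open Finset

theorem Nat.fib_eq_sum_Icc_choose (n : ℕ) :
    Nat.fib n = ∑ k ∈ Icc 1 n, (n - k).choose (k - 1) := by
  cases n with
  | zero => simp
  | succ m =>
    rw [Nat.fib_succ_eq_sum_choose, ← Nat.sum_antidiagonal_swap,
      Nat.sum_antidiagonal_eq_sum_range_succ_mk, ← Ico_add_one_right_eq_Icc, sum_Ico_eq_sum_range]
    refine sum_congr (by simp) fun k _ => ?_
    simp only [Prod.swap_prod_mk]
    congr 1 <;> omega

def strictSchreier (n : ℕ) : Finset (Finset ℕ) :=
  {E ∈ (Iic (n + 1)).powerset | n + 1 ∈ E ∧ ∀ x ∈ E, #E < x}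

namespace strictSchreier

variable {n : ℕ} {E : Finset ℕ}

theorem mem_def :
    E ∈ strictSchreier n ↔ (∀ x ∈ E, x ≤ n + 1) ∧ n + 1 ∈ E ∧ ∀ x ∈ E, #E < x := by
  simp only [strictSchreier, mem_filter, mem_powerset, subset_iff, mem_Iic]

theorem card_filter_card_eq {k : ℕ} (hk : 1 ≤ k) (hkn : k ≤ n) :
    #{E ∈ strictSchreier n | #E = k} = (n - k).choose (k - 1) := by
  calc #{E ∈ strictSchreier n | #E = k}
      = #(powersetCard (k - 1) (Ioo k (n + 1))) := by
        refine card_nbij' (·.erase (n + 1)) (insert (n + 1)) ?_ ?_ ?_ ?_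
        · intro E hE
          rw [mem_coe, mem_filter, mem_def] at hE
          obtain ⟨⟨hle, hmem, hlt⟩, rfl⟩ := hE
          rw [mem_coe, mem_powersetCard, card_erase_of_mem hmem]
          refine ⟨fun x hx => ?_, rfl⟩
          obtain ⟨hne, hx⟩ := mem_erase.1 hx
          exact mem_Ioo.2 ⟨hlt x hx, lt_of_le_of_ne (hle x hx) hne⟩
        · intro F hF
          rw [mem_coe, mem_powersetCard] at hF
          obtain ⟨hsub, hcard⟩ := hF
          have hnot : n + 1 ∉ F := fun h => (mem_Ioo.1 (hsub h)).2.false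
          rw [mem_coe, mem_filter, mem_def, card_insert_of_notMem hnot, hcard]
          simp only [forall_mem_insert, mem_insert_self, true_and]
          refine ⟨⟨⟨le_rfl, fun x hx => (mem_Ioo.1 (hsub hx)).2.le⟩, by omega,
            fun x hx => ?_⟩, by omega⟩
          have := (mem_Ioo.1 (hsub hx)).1
          omega
        · intro E hE
          exact insert_erase (mem_def.1 (mem_filter.1 hE).1).2.1
        · intro F hF
          exact erase_insert fun h => (mem_Ioo.1 ((mem_powersetCard.1 hF).1 h)).2.false
    _ = (n - k).choose (k - 1) := by
        rw [card_powersetCard, Nat.card_Ioo]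
        congr 1
        omega

theorem card_eq_fib (n : ℕ) : #(strictSchreier n) = Nat.fib n := by
  have hcard : ∀ E ∈ strictSchreier n, #E ∈ Icc 1 n := fun E hE => by
    obtain ⟨-, hmem, hlt⟩ := mem_def.1 hE
    exact mem_Icc.2 ⟨card_pos.2 ⟨_, hmem⟩, Nat.lt_succ_iff.1 (hlt _ hmem)⟩
  rw [card_eq_sum_card_fiberwise hcard, Nat.fib_eq_sum_Icc_choose]
  exact sum_congr rfl fun k hk => card_filter_card_eq (mem_Icc.1 hk).1 (mem_Icc.1 hk).2

theorem mem_iff_max'_min' :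
    E ∈ strictSchreier n ↔ ∃ h : E.Nonempty, E.max' h = n + 1 ∧ #E < E.min' h := by
  rw [mem_def]
  constructor
  · rintro ⟨hle, hmem, hlt⟩
    exact ⟨⟨n + 1, hmem⟩, le_antisymm (max'_le _ _ _ hle) (le_max' _ _ hmem),
      (lt_min'_iff _ _).2 hlt⟩
  · rintro ⟨h, hmax, hmin⟩
    exact ⟨fun x hx => hmax ▸ le_max' _ _ hx, hmax ▸ max'_mem _ _,
      fun x hx => hmin.trans_le (min'_le _ _ hx)⟩

theorem three_lt_of_mem (hn : 3 ≤ n) (hE : E ∈ strictSchreier n) (hcard : #E ≠ 2) :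
    ∀ x ∈ E, 3 < x := by
  obtain ⟨-, hmem, hlt⟩ := mem_def.1 hE
  intro x hx
  by_cases hone : #E = 1
  · obtain ⟨a, rfl⟩ := card_eq_one.1 hone
    rw [mem_singleton.1 hx, ← mem_singleton.1 hmem]
    omega
  · have := hlt x hx
    have := card_pos.2 ⟨x, hx⟩
    omega

end strictSchreier

open strictSchreier in
theorem stmt18 (n : ℕ) (hn : n ≥ 3) :
    {E : Finset ℕ | ∃ h : E.Nonempty, (∀ x ∈ E, 0 < x) ∧
      E.max' h = n + 1 ∧ 2 ∉ E ∧ 3 ∉ E ∧ E.card < E.min' h ∧ E.card ≠ 2}.ncard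
      = Nat.fib n - (n - 2) := by
  have hset : {E : Finset ℕ | ∃ h : E.Nonempty, (∀ x ∈ E, 0 < x) ∧
      E.max' h = n + 1 ∧ 2 ∉ E ∧ 3 ∉ E ∧ E.card < E.min' h ∧ E.card ≠ 2}
      = ↑{E ∈ strictSchreier n | #E ≠ 2} := by
    ext E
    rw [coe_filter, Set.mem_ofPred, Set.mem_ofPred, mem_iff_max'_min']
    constructor
    · rintro ⟨h, -, hmax, -, -, hmin, hcard⟩
      exact ⟨⟨h, hmax, hmin⟩, hcard⟩
    · rintro ⟨⟨h, hmax, hmin⟩, hcard⟩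
      have h3 := three_lt_of_mem hn (mem_iff_max'_min'.2 ⟨h, hmax, hmin⟩) hcard
      exact ⟨h, fun x hx => by grind, hmax, fun h2 => by grind, fun h3' => by grind, hmin,
        hcard⟩
  have hsplit := card_filter_add_card_filter_not (s := strictSchreier n) (fun E => #E = 2)
  rw [hset, Set.ncard_coe_finset, ← card_eq_fib, ← hsplit,
    card_filter_card_eq (k := 2) (by norm_num) (by omega)]
  simp
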